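/- arXiv:2004.02171 — 2 statements merged into one kernel-verified Lean document; each statement's English description precedes it below -/
import Mathlib

section
/- Let $r$ have density $f_r(r) = \frac{2r}{D_1^2-D_0^2}$ on $[D_0,D_1]$ and let $\xi \sim \mathrm{Exp}(1)$ be independent of $r$. Then for $P, \upsilon > 0$ and $\alpha > 0$, the probability $\mathcal{P}_0 = \Pr\{P \xi r^{-\alpha} > \upsilon^2\}$ equals $\frac{2 (P/\upsilon^2)^{2/\alpha}}{\alpha (D_1^2 - D_0^2)}\left[\Gamma\left(\frac{2}{\alpha}, \frac{\upsilon^2 D_0^{\alpha}}{P}\right) - \Gamma\left(\frac{2}{\alpha}, \frac{\upsilon^2 D_1^{\alpha}}{P}\right)\right]$. -/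
open Real MeasureTheory ProbabilityTheory

/-- The upper incomplete Gamma function `Γ(a, x) = ∫_x^∞ t^(a-1) e^(-t) dt`. -/
noncomputable def upperGamma (a x : ℝ) : ℝ := ∫ t in Set.Ioi x, t ^ (a - 1) * Real.exp (-t)

/-- The law of the distance `r`, with density `2r/(D₁²-D₀²)` on `[D₀, D₁]`. -/
noncomputable def distLaw (D0 D1 : ℝ) : Measure ℝ :=
  volume.withDensity fun t =>
    ENNReal.ofReal ((Set.Icc D0 D1).indicator (fun s => 2 * s / (D1 ^ 2 - D0 ^ 2)) t)

/-!
Write `c = υ²/P`. Given `r = x > 0`, the event is `ξ > c x^α`, of probability `exp (-c x^α)`,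
so by Fubini `𝒫₀ = ∫_{D₀}^{D₁} 2x/(D₁²-D₀²) · exp (-c x^α) dx`. The substitution `t = c x^α`
turns `x dx` into `t^(2/α-1) dt / (α c^(2/α))`, and the integral of `t^(2/α-1) e^(-t)` over
`[c D₀^α, c D₁^α]` is the difference of the two upper incomplete Gamma values.
-/

open Set

lemma ProbabilityTheory.expMeasure_Ioi {r x : ℝ} (hr : 0 < r) (hx : 0 ≤ x) :
    expMeasure r (Ioi x) = ENNReal.ofReal (exp (-(r * x))) := by
  have := isProbabilityMeasure_expMeasure hr
  have hexp : exp (-(r * x)) ≤ 1 := exp_le_one_iff.mpr (by nlinarith)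
  rw [← compl_Iic, prob_compl_eq_one_sub measurableSet_Iic, ← ofReal_cdf, cdf_expMeasure_eq hr,
    if_pos hx, ← ENNReal.ofReal_one, ← ENNReal.ofReal_sub _ (by linarith), sub_sub_cancel]

lemma upperGamma_sub_upperGamma {a x y : ℝ} (ha : 0 < a) (hx : 0 ≤ x) (hy : 0 ≤ y) :
    upperGamma a x - upperGamma a y = ∫ t in x..y, t ^ (a - 1) * exp (-t) := by
  have hint : IntegrableOn (fun t : ℝ => t ^ (a - 1) * exp (-t)) (Ioi 0) :=
    (GammaIntegral_convergent ha).congr_fun (fun t _ => mul_comm _ _) measurableSet_Ioi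
  exact intervalIntegral.integral_Ioi_sub_Ioi' (hint.mono_set (Ioi_subset_Ioi hx))
    (hint.mono_set (Ioi_subset_Ioi hy))

lemma intervalIntegral.integral_rpow_mul_exp_neg_mul_rpow {a b c α β : ℝ} (ha : 0 < a)
    (hb : 0 < b) (hc : 0 < c) (hα : 0 < α) :
    ∫ x in a..b, x ^ (β - 1) * exp (-(c * x ^ α)) =
      (α * c ^ (β / α))⁻¹ *
        ∫ t in c * a ^ α..c * b ^ α, t ^ (β / α - 1) * exp (-t) := by
  have hpos : ∀ x ∈ uIcc a b, 0 < x := fun x hx => (lt_min ha hb).trans_le hx.1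
  have hderiv : ∀ x ∈ uIcc a b, HasDerivAt (fun x => c * x ^ α) (c * (α * x ^ (α - 1))) x :=
    fun x hx => ((hasDerivAt_rpow_const (Or.inl (hpos x hx).ne')).const_mul c)
  have hderiv_cont : ContinuousOn (fun x => c * (α * x ^ (α - 1))) (uIcc a b) :=
    continuousOn_const.mul (continuousOn_const.mul
      (continuousOn_id.rpow_const fun x hx => Or.inl (hpos x hx).ne'))
  have hg_cont : ContinuousOn (fun t => t ^ (β / α - 1) * exp (-t))
      ((fun x => c * x ^ α) '' uIcc a b) := by
    refine ContinuousOn.mul ?_ (by fun_prop)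
    refine continuousOn_id.rpow_const ?_
    rintro _ ⟨x, hx, rfl⟩
    exact Or.inl (mul_pos hc (rpow_pos_of_pos (hpos x hx) α)).ne'
  have hsubst := intervalIntegral.integral_deriv_smul_comp' hderiv hderiv_cont hg_cont
  rw [← hsubst, ← intervalIntegral.integral_const_mul]
  refine intervalIntegral.integral_congr fun x hx => ?_
  have hx := hpos x hx
  simp only [Function.comp, smul_eq_mul]
  rw [mul_rpow hc.le (rpow_nonneg hx.le α), ← rpow_mul hx.le]
  have hc_pow : c * c ^ (β / α - 1) = c ^ (β / α) := by
    rw [mul_comm, ← rpow_add_one hc.ne', sub_add_cancel]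
  have hx_pow : x ^ (α - 1) * x ^ (α * (β / α - 1)) = x ^ (β - 1) := by
    rw [← rpow_add hx]; congr 1; field_simp; ring
  rw [eq_inv_mul_iff_mul_eq₀ (by positivity), ← hc_pow, ← hx_pow]
  ring

lemma intervalIntegral.integral_mul_exp_neg_mul_rpow {a b c α : ℝ} (ha : 0 < a) (hb : 0 < b)
    (hc : 0 < c) (hα : 0 < α) :
    ∫ x in a..b, x * exp (-(c * x ^ α)) =
      (α * c ^ (2 / α))⁻¹ * ∫ t in c * a ^ α..c * b ^ α, t ^ (2 / α - 1) * exp (-t) := by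
  simpa [show (2 : ℝ) - 1 = 1 by norm_num] using
    integral_rpow_mul_exp_neg_mul_rpow (β := 2) ha hb hc hα

lemma setLIntegral_Icc_ofReal_eq_ofReal_intervalIntegral {f : ℝ → ℝ} {a b : ℝ}
    (hab : a ≤ b) (hf : ContinuousOn f (Icc a b)) (hf_nonneg : ∀ x ∈ Icc a b, 0 ≤ f x) :
    ∫⁻ x in Icc a b, ENNReal.ofReal (f x) = ENNReal.ofReal (∫ x in a..b, f x) := by
  rw [intervalIntegral.integral_of_le hab, ← integral_Icc_eq_integral_Ioc,
    ofReal_integral_eq_lintegral_ofReal hf.integrableOn_Icc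
      (ae_restrict_of_forall_mem measurableSet_Icc hf_nonneg)]

lemma distLaw_eq_withDensity_restrict (D0 D1 : ℝ) :
    distLaw D0 D1 = (volume.restrict (Icc D0 D1)).withDensity
      fun t => ENNReal.ofReal (2 * t / (D1 ^ 2 - D0 ^ 2)) := by
  rw [distLaw, ← withDensity_indicator measurableSet_Icc]
  congr with t
  by_cases ht : t ∈ Icc D0 D1 <;> simp [ht]

lemma preimage_prodMk_received_power_gt {P υ α x : ℝ} (hP : 0 < P) (hx : 0 < x) :
    Prod.mk x ⁻¹' {p : ℝ × ℝ | υ ^ 2 < P * p.2 * p.1 ^ (-α)} =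
      Ioi (υ ^ 2 / P * x ^ α) := by
  ext y
  rw [mem_preimage, mem_ofPred_eq, mem_Ioi, rpow_neg hx.le, ← div_eq_mul_inv,
    lt_div_iff₀ (rpow_pos_of_pos hx α), div_mul_eq_mul_div, div_lt_iff₀ hP, mul_comm y]

lemma distLaw_prod_expMeasure_received_power_gt {P υ α D0 D1 : ℝ} (hP : 0 < P) (hD0 : 0 < D0)
    (hD : D0 < D1) :
    (distLaw D0 D1).prod (expMeasure 1) {p : ℝ × ℝ | υ ^ 2 < P * p.2 * p.1 ^ (-α)} =
      ENNReal.ofReal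
        (2 / (D1 ^ 2 - D0 ^ 2) * ∫ x in D0..D1, x * exp (-(υ ^ 2 / P * x ^ α))) := by
  have := isProbabilityMeasure_expMeasure one_pos
  have hK : 0 < D1 ^ 2 - D0 ^ 2 := by nlinarith
  have hS : MeasurableSet {p : ℝ × ℝ | υ ^ 2 < P * p.2 * p.1 ^ (-α)} :=
    measurableSet_lt measurable_const (by fun_prop)
  have hslice : ∀ x ∈ Icc D0 D1, ENNReal.ofReal (2 * x / (D1 ^ 2 - D0 ^ 2)) *
      expMeasure 1 (Prod.mk x ⁻¹' {p : ℝ × ℝ | υ ^ 2 < P * p.2 * p.1 ^ (-α)}) =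
      ENNReal.ofReal (2 / (D1 ^ 2 - D0 ^ 2) * (x * exp (-(υ ^ 2 / P * x ^ α)))) := by
    intro x hx
    have hx : 0 < x := hD0.trans_le hx.1
    rw [preimage_prodMk_received_power_gt hP hx, expMeasure_Ioi one_pos (by positivity), one_mul,
      ← ENNReal.ofReal_mul (by positivity), mul_div_right_comm, mul_assoc]
  rw [Measure.prod_apply hS, distLaw_eq_withDensity_restrict,
    lintegral_withDensity_eq_lintegral_mul _ (by fun_prop) (measurable_measure_prodMk_left hS)]
  simp only [Pi.mul_apply]
  rw [setLIntegral_congr_fun measurableSet_Icc hslice, ← intervalIntegral.integral_const_mul]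
  refine setLIntegral_Icc_ofReal_eq_ofReal_intervalIntegral hD.le ?_
    fun x hx => by have := hD0.trans_le hx.1; positivity
  have hrpow : ContinuousOn (fun x : ℝ => x ^ α) (Icc D0 D1) :=
    continuousOn_id.rpow_const fun x hx => Or.inl (hD0.trans_le hx.1).ne'
  fun_prop

/-- If `r` has density `2r/(D₁²-D₀²)` on `[D₀,D₁]` and `ξ ~ Exp(1)` is independent of `r`,
then `𝒫₀ = Pr{P ξ r^{-α} > υ²}` equals
`(2 (P/υ²)^{2/α} / (α (D₁² - D₀²))) [Γ(2/α, υ²D₀^α/P) - Γ(2/α, υ²D₁^α/P)]`. -/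
theorem prob_received_power_gt_threshold
    {Ω : Type*} [MeasurableSpace Ω] (μ : Measure Ω) [IsProbabilityMeasure μ]
    (r ξ : Ω → ℝ) (hr : Measurable r) (hξ : Measurable ξ)
    (P υ α D0 D1 : ℝ) (hP : 0 < P) (hυ : 0 < υ) (hα : 0 < α) (hD0 : 0 < D0) (hD : D0 < D1)
    (hlaw : Measure.map (fun ω => (r ω, ξ ω)) μ =
      (distLaw D0 D1).prod (expMeasure 1)) :
    μ {ω | P * ξ ω * (r ω) ^ (-α) > υ ^ 2} =
      ENNReal.ofReal
        (2 * (P / υ ^ 2) ^ (2 / α) / (α * (D1 ^ 2 - D0 ^ 2)) *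
          (upperGamma (2 / α) (υ ^ 2 * D0 ^ α / P) -
            upperGamma (2 / α) (υ ^ 2 * D1 ^ α / P))) := by
  have hS : MeasurableSet {p : ℝ × ℝ | υ ^ 2 < P * p.2 * p.1 ^ (-α)} :=
    measurableSet_lt measurable_const (by fun_prop)
  have hc : 0 < υ ^ 2 / P := by positivity
  have hcD : ∀ D, 0 < D → 0 ≤ υ ^ 2 / P * D ^ α := fun D hD_pos => by positivity
  calc μ {ω | P * ξ ω * (r ω) ^ (-α) > υ ^ 2}
      = (distLaw D0 D1).prod (expMeasure 1) {p : ℝ × ℝ | υ ^ 2 < P * p.2 * p.1 ^ (-α)} := by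
        rw [← hlaw, Measure.map_apply (hr.prodMk hξ) hS]
        rfl
    _ = _ := by
        rw [distLaw_prod_expMeasure_received_power_gt hP hD0 hD,
          intervalIntegral.integral_mul_exp_neg_mul_rpow hD0 (hD0.trans hD) hc hα,
          ← upperGamma_sub_upperGamma (by positivity) (hcD D0 hD0) (hcD D1 (hD0.trans hD)),
          mul_div_right_comm (υ ^ 2), mul_div_right_comm (υ ^ 2), ← inv_div (υ ^ 2) P,
          inv_rpow hc.le]
        field_simp
end

section
/- For a nonnegative random variable $X$, $\mathbb{E}[\ln(1+X)] = \int_0^{\infty} \frac{e^{-s}}{s}\left(1 - \mathbb{E}[e^{-sX}]\right) ds$. -/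
/-!
Since `log (1 + x) = ∫_1^{1+x} dt / t` and `1 / t = ∫_0^∞ e^{-st} ds`, Tonelli gives the
Frullani-type formula `log (1 + x) = ∫_0^∞ e^{-s} (1 - e^{-sx}) / s ds` for `x ≥ 0`; a second
application of Tonelli exchanges this integral with the expectation. All integrands are
nonnegative, so both sides are computed as the same integral in `ℝ≥0∞`.
-/

open Real MeasureTheory
open Set

lemma intervalIntegral_exp_neg_mul {s : ℝ} (hs : s ≠ 0) (a b : ℝ) :
    ∫ t in a..b, exp (-(s * t)) = (exp (-(s * a)) - exp (-(s * b))) / s := by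
  have h := intervalIntegral.integral_comp_mul_left exp (neg_ne_zero.2 hs) (a := a) (b := b)
  simp only [neg_mul, integral_exp, smul_eq_mul] at h
  rw [h]
  field_simp
  ring

lemma exp_neg_div_mul_one_sub_exp_neg_eq_integral {s : ℝ} (hs : s ≠ 0) (x : ℝ) :
    exp (-s) / s * (1 - exp (-(s * x))) = ∫ t in (1 : ℝ)..1 + x, exp (-(s * t)) := by
  rw [intervalIntegral_exp_neg_mul hs, mul_add, neg_add, exp_add, mul_one]
  ring

lemma lintegral_Ioi_exp_neg_mul {t : ℝ} (ht : 0 < t) :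
    ∫⁻ s in Ioi 0, ENNReal.ofReal (exp (-(s * t))) = ENNReal.ofReal t⁻¹ := by
  have hexp : (fun s => exp (-(s * t))) = fun s => exp (-t * s) := by
    ext s
    ring_nf
  rw [← ofReal_integral_eq_lintegral_ofReal, hexp, integral_exp_mul_Ioi (neg_lt_zero.2 ht)]
  · simp
  · rw [hexp]
    exact integrableOn_exp_mul_Ioi (neg_lt_zero.2 ht) 0
  · exact ae_of_all _ fun s => (exp_pos _).le

lemma lintegral_Ioc_one_inv {b : ℝ} (hb : 1 ≤ b) :
    ∫⁻ t in Ioc 1 b, ENNReal.ofReal t⁻¹ = ENNReal.ofReal (log b) := by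
  have hpos : ∀ t ∈ Icc (1 : ℝ) b, 0 < t := fun t ht => one_pos.trans_le ht.1
  have hint : IntegrableOn (fun t : ℝ => t⁻¹) (Ioc 1 b) :=
    (ContinuousOn.integrableOn_Icc (continuousOn_inv₀.mono fun t ht => (hpos t ht).ne')).mono_set
      Ioc_subset_Icc_self
  rw [← ofReal_integral_eq_lintegral_ofReal hint
    ((ae_restrict_iff' measurableSet_Ioc).2 (ae_of_all _ fun t ht =>
      inv_nonneg.2 (hpos t (Ioc_subset_Icc_self ht)).le)),
    ← intervalIntegral.integral_of_le hb, integral_inv_of_pos one_pos (one_pos.trans_le hb),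
    div_one]

lemma lintegral_exp_neg_div_mul_one_sub_exp_neg_eq_log {x : ℝ} (hx : 0 ≤ x) :
    ∫⁻ s in Ioi 0, ENNReal.ofReal (exp (-s) / s * (1 - exp (-(s * x)))) =
      ENNReal.ofReal (log (1 + x)) := by
  have hx1 : (1 : ℝ) ≤ 1 + x := by linarith
  calc ∫⁻ s in Ioi 0, ENNReal.ofReal (exp (-s) / s * (1 - exp (-(s * x))))
      = ∫⁻ s in Ioi 0, ∫⁻ t in Ioc 1 (1 + x), ENNReal.ofReal (exp (-(s * t))) := by
        refine setLIntegral_congr_fun measurableSet_Ioi fun s hs => ?_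
        rw [exp_neg_div_mul_one_sub_exp_neg_eq_integral (ne_of_gt hs),
          intervalIntegral.integral_of_le hx1,
          ofReal_integral_eq_lintegral_ofReal (by fun_prop : Continuous _).integrableOn_Ioc
            (ae_of_all _ fun t => (exp_pos _).le)]
    _ = ∫⁻ t in Ioc 1 (1 + x), ∫⁻ s in Ioi 0, ENNReal.ofReal (exp (-(s * t))) :=
        lintegral_lintegral_swap (by fun_prop)
    _ = ∫⁻ t in Ioc 1 (1 + x), ENNReal.ofReal t⁻¹ :=
        setLIntegral_congr_fun measurableSet_Ioc fun t ht =>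
          lintegral_Ioi_exp_neg_mul (one_pos.trans ht.1)
    _ = ENNReal.ofReal (log (1 + x)) := lintegral_Ioc_one_inv hx1

lemma lintegral_ofReal_one_sub {Ω : Type*} [MeasurableSpace Ω] {μ : Measure Ω}
    [IsProbabilityMeasure μ] {g : Ω → ℝ} (hg : Integrable g μ) (hg1 : ∀ᵐ ω ∂μ, g ω ≤ 1) :
    ∫⁻ ω, ENNReal.ofReal (1 - g ω) ∂μ = ENNReal.ofReal (1 - ∫ ω, g ω ∂μ) := by
  have hint : Integrable (fun ω => 1 - g ω) μ := (integrable_const 1).sub hg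
  rw [← ofReal_integral_eq_lintegral_ofReal hint (hg1.mono fun _ h => sub_nonneg.2 h),
    integral_sub (integrable_const 1) hg, integral_const]
  simp

lemma exp_neg_mul_le_one {s x : ℝ} (hs : 0 ≤ s) (hx : 0 ≤ x) : exp (-(s * x)) ≤ 1 :=
  exp_le_one_iff.2 (neg_nonpos.2 (mul_nonneg hs hx))

section LaplaceTransform

variable {Ω : Type*} [MeasurableSpace Ω] {μ : Measure Ω} {X : Ω → ℝ}

lemma integrable_exp_neg_mul [IsFiniteMeasure μ] (hX : Measurable X) (hX0 : ∀ ω, 0 ≤ X ω)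
    {s : ℝ} (hs : 0 ≤ s) : Integrable (fun ω => exp (-(s * X ω))) μ :=
  Integrable.of_bound (by fun_prop) 1
    (ae_of_all _ fun ω => (norm_of_nonneg (exp_pos _).le).trans_le (exp_neg_mul_le_one hs (hX0 ω)))

lemma integral_exp_neg_mul_le_one [IsProbabilityMeasure μ] (hX : Measurable X)
    (hX0 : ∀ ω, 0 ≤ X ω) {s : ℝ} (hs : 0 ≤ s) : ∫ ω, exp (-(s * X ω)) ∂μ ≤ 1 := by
  simpa using integral_mono (integrable_exp_neg_mul (μ := μ) hX hX0 hs) (integrable_const 1)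
    fun ω => exp_neg_mul_le_one hs (hX0 ω)

lemma measurable_integral_exp_neg_mul [SFinite μ] (hX : Measurable X) :
    Measurable fun s => ∫ ω, exp (-(s * X ω)) ∂μ :=
  (by fun_prop : Measurable fun p : ℝ × Ω => exp (-(p.1 * X p.2))).stronglyMeasurable
    |>.integral_prod_right' |>.measurable

lemma lintegral_ofReal_mul_one_sub_exp_neg_mul [IsProbabilityMeasure μ] (hX : Measurable X)
    (hX0 : ∀ ω, 0 ≤ X ω) {c s : ℝ} (hc : 0 ≤ c) (hs : 0 ≤ s) :
    ∫⁻ ω, ENNReal.ofReal (c * (1 - exp (-(s * X ω)))) ∂μ =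
      ENNReal.ofReal (c * (1 - ∫ ω, exp (-(s * X ω)) ∂μ)) := by
  simp_rw [ENNReal.ofReal_mul hc]
  rw [lintegral_const_mul' _ _ ENNReal.ofReal_ne_top, lintegral_ofReal_one_sub
    (integrable_exp_neg_mul hX hX0 hs) (ae_of_all _ fun ω => exp_neg_mul_le_one hs (hX0 ω))]

end LaplaceTransform

theorem hamdi_log_identity_general
    {Ω : Type*} [MeasurableSpace Ω] (μ : Measure Ω) [IsProbabilityMeasure μ]
    (X : Ω → ℝ) (hX : Measurable X) (hX0 : ∀ ω, 0 ≤ X ω) :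
    (∫ ω, Real.log (1 + X ω) ∂μ) =
      ∫ s in Set.Ioi (0 : ℝ),
        Real.exp (-s) / s * (1 - ∫ ω, Real.exp (-(s * X ω)) ∂μ) := by
  have hc : ∀ s ∈ Ioi (0 : ℝ), 0 ≤ exp (-s) / s := fun s hs => div_nonneg (exp_pos _).le hs.le
  have hrhs_nonneg : ∀ s ∈ Ioi (0 : ℝ), 0 ≤ exp (-s) / s * (1 - ∫ ω, exp (-(s * X ω)) ∂μ) :=
    fun s hs => mul_nonneg (hc s hs) (sub_nonneg.2 (integral_exp_neg_mul_le_one hX hX0 hs.le))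
  have hlaplace_meas := measurable_integral_exp_neg_mul (μ := μ) hX
  rw [integral_eq_lintegral_of_nonneg_ae (ae_of_all _ fun ω => log_nonneg (by linarith [hX0 ω]))
      (by fun_prop : Measurable fun ω => log (1 + X ω)).aestronglyMeasurable,
    integral_eq_lintegral_of_nonneg_ae
      ((ae_restrict_iff' measurableSet_Ioi).2 (ae_of_all _ hrhs_nonneg)) (by fun_prop)]
  congr 1
  calc ∫⁻ ω, ENNReal.ofReal (log (1 + X ω)) ∂μ
      = ∫⁻ ω, (∫⁻ s in Ioi 0, ENNReal.ofReal (exp (-s) / s * (1 - exp (-(s * X ω))))) ∂μ := by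
        simp_rw [lintegral_exp_neg_div_mul_one_sub_exp_neg_eq_log (hX0 _)]
    _ = ∫⁻ s in Ioi 0, ∫⁻ ω, ENNReal.ofReal (exp (-s) / s * (1 - exp (-(s * X ω)))) ∂μ :=
        lintegral_lintegral_swap (by fun_prop)
    _ = _ := setLIntegral_congr_fun measurableSet_Ioi fun s hs =>
        lintegral_ofReal_mul_one_sub_exp_neg_mul hX hX0 (hc s hs) hs.le

/-- Hamdi's lemma: for a nonnegative random variable `X`,
`E[ln(1+X)] = ∫_0^∞ (e^{-s}/s) (1 - E[e^{-sX}]) ds`. -/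
theorem hamdi_log_identity
    {Ω : Type*} [MeasurableSpace Ω] (μ : Measure Ω) [IsProbabilityMeasure μ]
    (X : Ω → ℝ) (hX : Measurable X) (hX0 : ∀ ω, 0 ≤ X ω)
    (hInt : Integrable (fun ω => Real.log (1 + X ω)) μ) :
    (∫ ω, Real.log (1 + X ω) ∂μ) =
      ∫ s in Set.Ioi (0 : ℝ),
        Real.exp (-s) / s * (1 - ∫ ω, Real.exp (-(s * X ω)) ∂μ) :=
  hamdi_log_identity_general μ X hX hX0
end
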